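/- arXiv:0910.0334 — 4 statements merged into one kernel-verified Lean document; each statement's English description precedes it below -/
import Mathlib

section
/- Let g>0, θ∈ℝ, γ>1, k>0, ρ₀>0 be constants, S, Z : ℝ→ℝ C¹ functions, and I₁, I₂, h_w given C¹ functions (the hydrostatic pressure term, the pressure source term, and the water height). Suppose M, A, Q : ℝ×ℝ→ℝ are C¹ with M>0, A>0, S−A>0, that the water-layer equations ∂ₜA+∂ₓQ=0 and ∂ₜQ+∂ₓ( Q²/A + g I₁ cosθ + A·M c_a²/(γ(S−A)) ) = −gA∂ₓZ + g I₂ cosθ + (M c_a²/(γ(S−A)))·∂ₓA hold with c_a² = kγ(ρ₀M/(S−A))^{γ−1}, and that the geometric Leibniz identity ∂ₓ[I₁(t,x)] = I₂(t,x) + A(t,x)·∂ₓ[h_w(t,x)] holds. Then the water velocity u = Q/A satisfies ∂ₜu + ∂ₓ( u²/2 + g h_w cosθ + gZ + M c_a²/(γ(S−A)) ) = 0. -/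
/-!
Subtracting `u` times the mass equation from the momentum equation turns `∂ₜQ + ∂ₓ(Q²/A)` into
`A (∂ₜu + ∂ₓ(u²/2))`. On the right, the Leibniz identity cancels the source `g I₂ cos θ` against
`g cos θ ∂ₓI₁`, and `P ∂ₓA` cancels against `∂ₓ(A P)`, `P` being the air pressure term; what is left
is `A` times the claimed equation, and `A > 0`.
-/

open Real MeasureTheory

/-- Partial derivative with respect to the first (time) variable. -/
noncomputable def pt (f : ℝ → ℝ → ℝ) (t x : ℝ) : ℝ := deriv (fun s => f s x) t

/-- Partial derivative with respect to the second (space) variable. -/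
noncomputable def px (f : ℝ → ℝ → ℝ) (t x : ℝ) : ℝ := deriv (fun y => f t y) x

open Function

section PartialDerivatives

variable {f : ℝ → ℝ → ℝ} {t x : ℝ}

theorem differentiableAt_px (hf : DifferentiableAt ℝ (uncurry f) (t, x)) :
    DifferentiableAt ℝ (fun y => f t y) x :=
  hf.comp x ((differentiableAt_const t).prodMk differentiableAt_id)

theorem hasDerivAt_px (hf : DifferentiableAt ℝ (uncurry f) (t, x)) :
    HasDerivAt (fun y => f t y) (px f t x) x :=
  (differentiableAt_px hf).hasDerivAt

theorem hasDerivAt_pt (hf : DifferentiableAt ℝ (uncurry f) (t, x)) :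
    HasDerivAt (fun s => f s x) (pt f t x) t :=
  (hf.comp (f := fun s => (s, x)) t
    (differentiableAt_id.prodMk (differentiableAt_const x))).hasDerivAt

end PartialDerivatives

theorem pt_add_px_sq_div_two_of_mass_conservation {A Q u : ℝ → ℝ → ℝ} {t x : ℝ}
    (hA : DifferentiableAt ℝ (uncurry A) (t, x)) (hQ : DifferentiableAt ℝ (uncurry Q) (t, x))
    (hA0 : A t x ≠ 0) (hu : ∀ t x, u t x = Q t x / A t x)
    (hmass : pt A t x + px Q t x = 0) :
    pt u t x + px (fun t x => u t x ^ 2 / 2) t x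
      = (pt Q t x + px (fun t x => Q t x ^ 2 / A t x) t x) / A t x := by
  obtain rfl : u = fun t x => Q t x / A t x := funext₂ hu
  have hut := ((hasDerivAt_pt hQ).fun_div (hasDerivAt_pt hA) hA0).deriv
  have hkin := ((((hasDerivAt_px hQ).fun_div (hasDerivAt_px hA) hA0).fun_pow 2).div_const 2).deriv
  have hflux := (((hasDerivAt_px hQ).fun_pow 2).fun_div (hasDerivAt_px hA) hA0).deriv
  simp only [pt, px] at hut hkin hflux hmass ⊢
  rw [hut, hkin, hflux]
  push_cast
  field_simp
  linear_combination (-(A t x * Q t x)) * hmass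

theorem pt_add_px_sq_div_eq_of_momentum_balance {A Q I₁ I₂ hw P : ℝ → ℝ → ℝ} {t x g c z' : ℝ}
    (hA : DifferentiableAt ℝ (fun y => A t y) x) (hQ : DifferentiableAt ℝ (fun y => Q t y) x)
    (hA0 : A t x ≠ 0) (hI₁ : DifferentiableAt ℝ (fun y => I₁ t y) x)
    (hP : DifferentiableAt ℝ (fun y => P t y) x)
    (hmom : pt Q t x + px (fun t x => Q t x ^ 2 / A t x + g * I₁ t x * c + A t x * P t x) t x
      = -g * A t x * z' + g * I₂ t x * c + P t x * px A t x)
    (hLeibniz : px I₁ t x = I₂ t x + A t x * px hw t x) :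
    pt Q t x + px (fun t x => Q t x ^ 2 / A t x) t x
      = -A t x * (g * px hw t x * c + g * z' + px P t x) := by
  have hQ2A : DifferentiableAt ℝ (fun y => Q t y ^ 2 / A t y) x := (hQ.pow 2).div hA hA0
  have hflux : px (fun t x => Q t x ^ 2 / A t x + g * I₁ t x * c + A t x * P t x) t x
      = px (fun t x => Q t x ^ 2 / A t x) t x + g * px I₁ t x * c
        + (px A t x * P t x + A t x * px P t x) :=
    ((hQ2A.hasDerivAt.add ((hI₁.hasDerivAt.const_mul g).mul_const c)).add
      (hA.hasDerivAt.fun_mul hP.hasDerivAt)).deriv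
  linear_combination hmom - hflux - g * c * hLeibniz

theorem differentiableAt_airPressureTerm {m s : ℝ → ℝ} {x : ℝ} (k γ ρ₀ : ℝ)
    (hm : DifferentiableAt ℝ m x) (hs : DifferentiableAt ℝ s x)
    (hρ₀ : ρ₀ ≠ 0) (hm0 : m x ≠ 0) (hs0 : s x ≠ 0) (hγ : γ ≠ 0) :
    DifferentiableAt ℝ (fun y => m y * (k * γ * (ρ₀ * m y / s y) ^ (γ - 1)) / (γ * s y)) x := by
  have hbase : ρ₀ * m x / s x ≠ 0 := div_ne_zero (mul_ne_zero hρ₀ hm0) hs0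
  have hden : γ * s x ≠ 0 := mul_ne_zero hγ hs0
  fun_prop (disch := first | assumption | exact Or.inl hbase)

theorem water_velocity_transport_general
    (g θ γ k ρ₀ : ℝ) (hγ : 1 < γ) (hρ₀ : 0 < ρ₀)
    (S Z : ℝ → ℝ) (hSreg : ContDiff ℝ 1 S) (hZreg : ContDiff ℝ 1 Z)
    (I₁ I₂ hw : ℝ → ℝ → ℝ)
    (hI₁reg : ContDiff ℝ 1 (Function.uncurry I₁))
    (hhwreg : ContDiff ℝ 1 (Function.uncurry hw))
    (M A Q : ℝ → ℝ → ℝ)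
    (hMreg : ContDiff ℝ 1 (Function.uncurry M))
    (hAreg : ContDiff ℝ 1 (Function.uncurry A))
    (hQreg : ContDiff ℝ 1 (Function.uncurry Q))
    (hMpos : ∀ t x, 0 < M t x) (hApos : ∀ t x, 0 < A t x)
    (hSA : ∀ t x, 0 < S x - A t x)
    (ca2 : ℝ → ℝ → ℝ)
    (hca2 : ∀ t x, ca2 t x = k * γ * (ρ₀ * M t x / (S x - A t x)) ^ (γ - 1))
    (hmass : ∀ t x, pt A t x + px Q t x = 0)
    (hmom : ∀ t x,
      pt Q t x + px (fun t x => Q t x ^ 2 / A t x + g * I₁ t x * Real.cos θ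
          + A t x * (M t x * ca2 t x / (γ * (S x - A t x)))) t x
        = -g * A t x * deriv Z x + g * I₂ t x * Real.cos θ
          + M t x * ca2 t x / (γ * (S x - A t x)) * px A t x)
    (hLeibniz : ∀ t x, px I₁ t x = I₂ t x + A t x * px hw t x)
    (u : ℝ → ℝ → ℝ) (hu : ∀ t x, u t x = Q t x / A t x) :
    ∀ t x, pt u t x
        + px (fun t x => u t x ^ 2 / 2 + g * hw t x * Real.cos θ + g * Z x
            + M t x * ca2 t x / (γ * (S x - A t x))) t x = 0 := by
  intro t x
  obtain ⟨P, hP⟩ : ∃ P : ℝ → ℝ → ℝ, ∀ t x, M t x * ca2 t x / (γ * (S x - A t x)) = P t x :=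
    ⟨_, fun _ _ => rfl⟩
  simp only [hP] at hmom ⊢
  have hdiff {f : ℝ → ℝ → ℝ} (hf : ContDiff ℝ 1 (uncurry f)) :
      DifferentiableAt ℝ (uncurry f) (t, x) := hf.differentiable one_ne_zero _
  have hA0 : A t x ≠ 0 := (hApos t x).ne'
  have hAx := differentiableAt_px (hdiff hAreg)
  have hQx := differentiableAt_px (hdiff hQreg)
  have hPx : DifferentiableAt ℝ (fun y => P t y) x := by
    simp only [← hP, hca2]
    exact differentiableAt_airPressureTerm k γ ρ₀ (differentiableAt_px (hdiff hMreg))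
      ((hSreg.differentiable one_ne_zero x).fun_sub hAx)
      hρ₀.ne' (hMpos t x).ne' (hSA t x).ne' (by positivity)
  have hu2 : DifferentiableAt ℝ (fun y => u t y ^ 2 / 2) x := by
    simp only [hu]
    exact ((hQx.div hAx hA0).pow 2).div_const 2
  have htarget : px (fun t x => u t x ^ 2 / 2 + g * hw t x * cos θ + g * Z x + P t x) t x
      = px (fun t x => u t x ^ 2 / 2) t x + g * px hw t x * cos θ + g * deriv Z x + px P t x :=
    (((hu2.hasDerivAt.add (((hasDerivAt_px (hdiff hhwreg)).const_mul g).mul_const _)).add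
      ((hZreg.differentiable one_ne_zero x).hasDerivAt.const_mul g)).add hPx.hasDerivAt).deriv
  have hkin := pt_add_px_sq_div_two_of_mass_conservation (hdiff hAreg) (hdiff hQreg) hA0 hu
    (hmass t x)
  rw [pt_add_px_sq_div_eq_of_momentum_balance hAx hQx hA0 (differentiableAt_px (hdiff hI₁reg))
    hPx (hmom t x) (hLeibniz t x), neg_mul, neg_div, mul_div_cancel_left₀ _ hA0] at hkin
  rw [htarget]
  linarith

/-- for C¹ solutions of the water-layer equations (with the
geometric Leibniz identity `∂ₓ I₁ = I₂ + A ∂ₓ h_w`), the water velocity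
`u = Q/A` satisfies
`∂ₜ u + ∂ₓ (u²/2 + g h_w cos θ + g Z + M c_a²/(γ(S-A))) = 0`. -/
theorem water_velocity_transport
    (g θ γ k ρ₀ : ℝ) (hg : 0 < g) (hγ : 1 < γ) (hk : 0 < k) (hρ₀ : 0 < ρ₀)
    (S Z : ℝ → ℝ) (hSreg : ContDiff ℝ 1 S) (hZreg : ContDiff ℝ 1 Z)
    (I₁ I₂ hw : ℝ → ℝ → ℝ)
    (hI₁reg : ContDiff ℝ 1 (Function.uncurry I₁))
    (hI₂reg : ContDiff ℝ 1 (Function.uncurry I₂))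
    (hhwreg : ContDiff ℝ 1 (Function.uncurry hw))
    (M A Q : ℝ → ℝ → ℝ)
    (hMreg : ContDiff ℝ 1 (Function.uncurry M))
    (hAreg : ContDiff ℝ 1 (Function.uncurry A))
    (hQreg : ContDiff ℝ 1 (Function.uncurry Q))
    (hMpos : ∀ t x, 0 < M t x) (hApos : ∀ t x, 0 < A t x)
    (hSA : ∀ t x, 0 < S x - A t x)
    (ca2 : ℝ → ℝ → ℝ)
    (hca2 : ∀ t x, ca2 t x = k * γ * (ρ₀ * M t x / (S x - A t x)) ^ (γ - 1))
    (hmass : ∀ t x, pt A t x + px Q t x = 0)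
    (hmom : ∀ t x,
      pt Q t x + px (fun t x => Q t x ^ 2 / A t x + g * I₁ t x * Real.cos θ
          + A t x * (M t x * ca2 t x / (γ * (S x - A t x)))) t x
        = -g * A t x * deriv Z x + g * I₂ t x * Real.cos θ
          + M t x * ca2 t x / (γ * (S x - A t x)) * px A t x)
    (hLeibniz : ∀ t x, px I₁ t x = I₂ t x + A t x * px hw t x)
    (u : ℝ → ℝ → ℝ) (hu : ∀ t x, u t x = Q t x / A t x) :
    ∀ t x, pt u t x
        + px (fun t x => u t x ^ 2 / 2 + g * hw t x * Real.cos θ + g * Z x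
            + M t x * ca2 t x / (γ * (S x - A t x))) t x = 0 :=
  water_velocity_transport_general g θ γ k ρ₀ hγ hρ₀ S Z hSreg hZreg I₁ I₂ hw hI₁reg hhwreg M A Q
    hMreg hAreg hQreg hMpos hApos hSA ca2 hca2 hmass hmom hLeibniz u hu
end

section
/- Let u, v, A, M, S, c_a, c_w be real numbers with S ≠ A, and let 𝒟 be the 4×4 real matrix with rows (0, 1, 0, 0), (c_a²−v², 2v, (M/(S−A))c_a², 0), (0, 0, 0, 1), ((A/(S−A))c_a², 0, c_w² + (AM/(S−A)²)c_a² − u², 2u). Then for every λ ∈ ℝ, det(λ·I₄ − 𝒟) = (λ² − 2vλ − (c_a² − v²))·(λ² − 2uλ − (c_w² + (AM/(S−A)²)c_a² − u²)) − (AM/(S−A)²)·c_a⁴. In particular λ is an eigenvalue of 𝒟 if and only if (λ² − 2vλ − (c_a² − v²))·(λ² − 2uλ − (c_w² + (AM/(S−A)²)c_a² − u²)) = (AM/(S−A)²)·c_a⁴. -/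
open Matrix

theorem Matrix.hasEigenvalue_toLin'_iff_det_eq_zero {R n : Type*} [CommRing R] [IsDomain R]
    [Fintype n] [DecidableEq n] (A : Matrix n n R) (μ : R) :
    Module.End.HasEigenvalue (toLin' A) μ ↔ (μ • (1 : Matrix n n R) - A).det = 0 := by
  rw [Module.End.hasEigenvalue_iff_isRoot_charpoly, charpoly_toLin', Polynomial.IsRoot,
    eval_charpoly, scalar_apply, smul_one_eq_diagonal]

theorem Matrix.det_smul_one_sub_coupled_companion_blocks {R : Type*} [CommRing R]
    (a b c d e f l : R) :
    (l • (1 : Matrix (Fin 4) (Fin 4) R) - !![0, 1, 0, 0; a, b, c, 0; 0, 0, 0, 1; d, 0, e, f]).det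
      = (l ^ 2 - b * l - a) * (l ^ 2 - f * l - e) - c * d := by
  rw [smul_one_eq_diagonal]
  simp [det_succ_row_zero, Fin.sum_univ_succ, Fin.succAbove]
  ring

theorem convection_matrix_charpoly_general
    (u v A M S ca cw : ℝ)
    (𝒟 : Matrix (Fin 4) (Fin 4) ℝ)
    (h𝒟 : 𝒟 = !![0, 1, 0, 0;
                  ca ^ 2 - v ^ 2, 2 * v, (M / (S - A)) * ca ^ 2, 0;
                  0, 0, 0, 1;
                  (A / (S - A)) * ca ^ 2, 0,
                    cw ^ 2 + (A * M / (S - A) ^ 2) * ca ^ 2 - u ^ 2, 2 * u]) :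
    ∀ l : ℝ,
      (l • (1 : Matrix (Fin 4) (Fin 4) ℝ) - 𝒟).det
        = (l ^ 2 - 2 * v * l - (ca ^ 2 - v ^ 2))
            * (l ^ 2 - 2 * u * l - (cw ^ 2 + (A * M / (S - A) ^ 2) * ca ^ 2 - u ^ 2))
          - (A * M / (S - A) ^ 2) * ca ^ 4
      ∧ (Module.End.HasEigenvalue (Matrix.toLin' 𝒟) l ↔
          (l ^ 2 - 2 * v * l - (ca ^ 2 - v ^ 2))
            * (l ^ 2 - 2 * u * l - (cw ^ 2 + (A * M / (S - A) ^ 2) * ca ^ 2 - u ^ 2))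
          = (A * M / (S - A) ^ 2) * ca ^ 4) := by
  intro l
  have hcoupling : M / (S - A) * ca ^ 2 * (A / (S - A) * ca ^ 2)
      = A * M / (S - A) ^ 2 * ca ^ 4 := by
    rw [mul_mul_mul_comm, div_mul_div_comm, ← sq, ← pow_add, mul_comm M]
  have hdet : (l • (1 : Matrix (Fin 4) (Fin 4) ℝ) - 𝒟).det
      = (l ^ 2 - 2 * v * l - (ca ^ 2 - v ^ 2))
          * (l ^ 2 - 2 * u * l - (cw ^ 2 + (A * M / (S - A) ^ 2) * ca ^ 2 - u ^ 2))
        - (A * M / (S - A) ^ 2) * ca ^ 4 := by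
    rw [h𝒟, det_smul_one_sub_coupled_companion_blocks, hcoupling]
  exact ⟨hdet, by rw [hasEigenvalue_toLin'_iff_det_eq_zero, hdet, sub_eq_zero]⟩

/-- characteristic polynomial of the convection matrix of the
two-layer model, and the corresponding characterization of its (real)
eigenvalues. -/
theorem convection_matrix_charpoly
    (u v A M S ca cw : ℝ) (hSA : S ≠ A)
    (𝒟 : Matrix (Fin 4) (Fin 4) ℝ)
    (h𝒟 : 𝒟 = !![0, 1, 0, 0;
                  ca ^ 2 - v ^ 2, 2 * v, (M / (S - A)) * ca ^ 2, 0;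
                  0, 0, 0, 1;
                  (A / (S - A)) * ca ^ 2, 0,
                    cw ^ 2 + (A * M / (S - A) ^ 2) * ca ^ 2 - u ^ 2, 2 * u]) :
    ∀ l : ℝ,
      (l • (1 : Matrix (Fin 4) (Fin 4) ℝ) - 𝒟).det
        = (l ^ 2 - 2 * v * l - (ca ^ 2 - v ^ 2))
            * (l ^ 2 - 2 * u * l - (cw ^ 2 + (A * M / (S - A) ^ 2) * ca ^ 2 - u ^ 2))
          - (A * M / (S - A) ^ 2) * ca ^ 4
      ∧ (Module.End.HasEigenvalue (Matrix.toLin' 𝒟) l ↔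
          (l ^ 2 - 2 * v * l - (ca ^ 2 - v ^ 2))
            * (l ^ 2 - 2 * u * l - (cw ^ 2 + (A * M / (S - A) ^ 2) * ca ^ 2 - u ^ 2))
          = (A * M / (S - A) ^ 2) * ca ^ 4) :=
  convection_matrix_charpoly_general u v A M S ca cw 𝒟 h𝒟
end

section
/- Let χ(ω) = (1/(2√3))𝟙_{[−√3,√3]}(ω), g>0. For each i ∈ ℤ let A_i ≥ 0, u_i ∈ ℝ, b_i > 0, h_i > 0, and set ℳ_i(ξ) = (A_i/b_i)χ((ξ−u_i)/b_i). For each interface let Δφ_{i+1/2} ∈ ℝ be arbitrary, and define the upwinded interface densities: ℳ⁻_{i+1/2}(ξ) = 𝟙_{{ξ>0}}ℳ_i(ξ) + 𝟙_{{ξ<0, ξ²−2gΔφ_{i+1/2}<0}}ℳ_i(−ξ) + 𝟙_{{ξ<0, ξ²−2gΔφ_{i+1/2}>0}}ℳ_{i+1}(−√(ξ²−2gΔφ_{i+1/2})), and ℳ⁺_{i+1/2}(ξ) = 𝟙_{{ξ<0}}ℳ_{i+1}(ξ) + 𝟙_{{ξ>0, ξ²+2gΔφ_{i+1/2}<0}}ℳ_{i+1}(−ξ)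 + 𝟙_{{ξ>0, ξ²+2gΔφ_{i+1/2}>0}}ℳ_i(√(ξ²+2gΔφ_{i+1/2})). Let Δt > 0 satisfy the CFL condition Δt·(|u_i| + √3·b_i) ≤ h_i for all i. Then for every i the updated density f_i(ξ) = ℳ_i(ξ) − (Δt/h_i)·ξ·(ℳ⁻_{i+1/2}(ξ) − ℳ⁺_{i−1/2}(ξ)) is nonnegative for all ξ ∈ ℝ, and consequently the updated macroscopic quantity A_i^{new} = ∫_ℝ f_i(ξ)dξ is nonnegative. -/
open Real MeasureTheory

/-- under the CFL condition `Δt (|u_i| + √3 b_i) ≤ h_i`, the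
kinetic finite-volume update
`f_i(ξ) = ℳ_i(ξ) - (Δt/h_i) ξ (ℳ⁻_{i+1/2}(ξ) - ℳ⁺_{i-1/2}(ξ))`
built from the rectangular profile `χ = (1/(2√3)) 𝟙_{[-√3,√3]}` is nonnegative,
and hence so is the updated macroscopic quantity `A_i^{new} = ∫ f_i`. -/
theorem kinetic_scheme_preserves_positivity
    (g : ℝ) (hg : 0 < g)
    (A u b h Δφ : ℤ → ℝ)
    (hA : ∀ i, 0 ≤ A i) (hb : ∀ i, 0 < b i) (hh : ∀ i, 0 < h i)
    (Δt : ℝ) (hΔt : 0 < Δt)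
    (χ : ℝ → ℝ)
    (hχ : ∀ ω, χ ω = (Set.Icc (-Real.sqrt 3) (Real.sqrt 3)).indicator
        (fun _ => 1 / (2 * Real.sqrt 3)) ω)
    (ℳ : ℤ → ℝ → ℝ)
    (hℳ : ∀ i ξ, ℳ i ξ = A i / b i * χ ((ξ - u i) / b i))
    (Mminus Mplus : ℤ → ℝ → ℝ)
    -- `Mminus i` is `ℳ⁻_{i+1/2}` and `Mplus i` is `ℳ⁺_{i+1/2}`.
    (hMminus : ∀ i ξ, Mminus i ξ
        = (if 0 < ξ then ℳ i ξ else 0)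
          + (if ξ < 0 ∧ ξ ^ 2 - 2 * g * Δφ i < 0 then ℳ i (-ξ) else 0)
          + (if ξ < 0 ∧ 0 < ξ ^ 2 - 2 * g * Δφ i then
              ℳ (i + 1) (-Real.sqrt (ξ ^ 2 - 2 * g * Δφ i)) else 0))
    (hMplus : ∀ i ξ, Mplus i ξ
        = (if ξ < 0 then ℳ (i + 1) ξ else 0)
          + (if 0 < ξ ∧ ξ ^ 2 + 2 * g * Δφ i < 0 then ℳ (i + 1) (-ξ) else 0)
          + (if 0 < ξ ∧ 0 < ξ ^ 2 + 2 * g * Δφ i then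
              ℳ i (Real.sqrt (ξ ^ 2 + 2 * g * Δφ i)) else 0))
    (hCFL : ∀ i, Δt * (|u i| + Real.sqrt 3 * b i) ≤ h i)
    (f : ℤ → ℝ → ℝ)
    (hf : ∀ i ξ, f i ξ
        = ℳ i ξ - Δt / h i * (ξ * (Mminus i ξ - Mplus (i - 1) ξ))) :
    (∀ i ξ, 0 ≤ f i ξ) ∧ (∀ i, 0 ≤ ∫ ξ, f i ξ) := by

  have hχ0 : ∀ ω, 0 ≤ χ ω := by
    intro ω; rw [hχ]
    apply Set.indicator_nonneg
    intro x _; positivity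
  have hM0 : ∀ i ξ, 0 ≤ ℳ i ξ := by
    intro i ξ; rw [hℳ]
    exact mul_nonneg (div_nonneg (hA i) (hb i).le) (hχ0 _)
  have hsupp : ∀ i ξ, ℳ i ξ ≠ 0 → |ξ| ≤ |u i| + Real.sqrt 3 * b i := by
    intro i ξ hne
    rw [hℳ i ξ] at hne
    have hχne : χ ((ξ - u i) / b i) ≠ 0 := fun h0 => hne (by rw [h0, mul_zero])
    rw [hχ] at hχne
    have hmem : (ξ - u i) / b i ∈ Set.Icc (-Real.sqrt 3) (Real.sqrt 3) := by
      by_contra hc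
      exact hχne (Set.indicator_of_notMem hc _)
    obtain ⟨h1, h2⟩ := hmem
    have hbpos := hb i
    have habs : |(ξ - u i) / b i| ≤ Real.sqrt 3 := abs_le.mpr ⟨h1, h2⟩
    rw [abs_div, abs_of_pos hbpos, div_le_iff₀ hbpos] at habs
    have h3 := abs_sub_abs_le_abs_sub ξ (u i)
    linarith
  have key : ∀ i ξ, Δt * |ξ| * ℳ i ξ ≤ h i * ℳ i ξ := by
    intro i ξ
    by_cases hz : ℳ i ξ = 0
    · simp [hz]
    · have hM := (hM0 i ξ).lt_of_ne (Ne.symm hz)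
      have h1 := hsupp i ξ hz
      have h2 : Δt * |ξ| ≤ Δt * (|u i| + Real.sqrt 3 * b i) :=
        mul_le_mul_of_nonneg_left h1 hΔt.le
      have h3 := hCFL i
      nlinarith
  have hfpos : ∀ i ξ, 0 ≤ f i ξ := by
    intro i ξ
    rw [hf]
    have hi1 : i - 1 + 1 = i := by ring
    rcases lt_trichotomy ξ 0 with hξ | hξ | hξ
    · -- ξ < 0
      have hMmnn : 0 ≤ Mminus i ξ := by
        rw [hMminus]
        refine add_nonneg (add_nonneg ?_ ?_) ?_ <;>
          · split_ifs
            exacts [hM0 _ _, le_rfl]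
      have hMp : Mplus (i - 1) ξ = ℳ i ξ := by
        simp [hMplus, hξ, lt_asymm hξ, hi1]
      have key' := key i ξ
      rw [abs_of_neg hξ] at key'
      rw [hMp, sub_nonneg, div_mul_eq_mul_div, div_le_iff₀ (hh i)]
      nlinarith [mul_nonneg (mul_nonneg hΔt.le (neg_nonneg.mpr hξ.le)) hMmnn, hM0 i ξ]
    · subst hξ
      simpa using hM0 i 0
    · -- 0 < ξ
      have hMpnn : 0 ≤ Mplus (i - 1) ξ := by
        rw [hMplus]
        refine add_nonneg (add_nonneg ?_ ?_) ?_ <;>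
          · split_ifs
            exacts [hM0 _ _, le_rfl]
      have hMm : Mminus i ξ = ℳ i ξ := by
        simp [hMminus, hξ, lt_asymm hξ]
      have key' := key i ξ
      rw [abs_of_pos hξ] at key'
      rw [hMm, sub_nonneg, div_mul_eq_mul_div, div_le_iff₀ (hh i)]
      nlinarith [mul_nonneg (mul_nonneg hΔt.le hξ.le) hMpnn, hM0 i ξ]
  exact ⟨hfpos, fun i => integral_nonneg (hfpos i)⟩
end

section
/- Let g>0, θ∈ℝ, γ>1, k>0, ρ₀>0, let S, Z : ℝ→ℝ be C¹ with S>0, and let I₁, I₂, h_w be C¹ functions satisfying the geometric identity ∂ₓ[I₁] = I₂ + A·∂ₓ[h_w]. Suppose M, A : ℝ×ℝ→ℝ are C¹, time-independent, with M>0, A>0, S−A>0, and set D ≡ 0, Q ≡ 0 (i.e. u = v = 0) and c_a² = kγ(ρ₀M/(S−A))^{γ−1}. If there are constants c₁, c₂ such that h_w cosθ + Z + M c_a²/(gγ(S−A)) = c₁ and c_a²/(γ−1) = c₂ everywhere, then (M, D, A, Q) is a stationary solution of the two-layer system: ∂ₜM+∂ₓD=0; ∂ₜD+∂ₓ(D²/M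 + M c_a²/γ) = (M c_a²/(γ(S−A)))∂ₓ(S−A); ∂ₜA+∂ₓQ=0; ∂ₜQ+∂ₓ(Q²/A + g I₁ cosθ + A M c_a²/(γ(S−A))) = −gA∂ₓZ + g I₂ cosθ + (M c_a²/(γ(S−A)))∂ₓA. -/
/-!
Constant enthalpy makes `c_a²` constant, and `c_a²` is a power of the air density
`ρ₀ M / (S - A)`, so the density and with it the air pressure term `κ = M c_a² / (γ (S - A))`
are constant. With `u = v = 0` and `M`, `A` stationary the mass equations are trivial and the
air momentum flux is `κ (S - A)`, which balances its source. For the water, the Leibniz identity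
turns `g cos θ ∂ₓI₁` into `g cos θ (I₂ + A ∂ₓh_w)`, and differentiating the constant head gives
`cos θ ∂ₓh_w = -Z'`, which cancels the bed slope term.
-/

open Real MeasureTheory

theorem Differentiable.apply_of_uncurry {𝕜 E F G : Type*} [NontriviallyNormedField 𝕜]
    [NormedAddCommGroup E] [NormedSpace 𝕜 E] [NormedAddCommGroup F] [NormedSpace 𝕜 F]
    [NormedAddCommGroup G] [NormedSpace 𝕜 G] {f : E → F → G}
    (hf : Differentiable 𝕜 (Function.uncurry f)) (a : E) : Differentiable 𝕜 (f a) :=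
  hf.comp ((differentiable_const a).prodMk differentiable_id)

theorem eq_rpow_inv_of_mul_rpow_eq {a b r p : ℝ} (ha : a ≠ 0) (hp : p ≠ 0) (hr : 0 ≤ r)
    (h : a * r ^ p = b) : r = (b / a) ^ p⁻¹ := by
  rw [← h, mul_div_cancel_left₀ _ ha, rpow_rpow_inv hr hp]

theorem deriv_mul_const_add_deriv_eq_zero {f Z : ℝ → ℝ} {c C : ℝ}
    (h : ∀ x, f x * c + Z x = C) (x : ℝ) : deriv f x * c + deriv Z x = 0 := by
  have hf : (fun y => f y * c) = fun y => C - Z y := funext fun y => by linarith [h y]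
  rw [← deriv_mul_const_field, hf, deriv_const_sub, neg_add_cancel]

theorem air_pressure_eq {k γ ρ₀ m w c c₂ : ℝ} (hk : k ≠ 0) (hγ : 1 < γ) (hρ₀ : 0 < ρ₀)
    (hm : 0 ≤ m) (hw : 0 ≤ w) (hc : c = k * γ * (ρ₀ * m / w) ^ (γ - 1))
    (henthalpy : c / (γ - 1) = c₂) :
    m * c / (γ * w) = ((γ - 1) * c₂ / (k * γ)) ^ (γ - 1)⁻¹ * ((γ - 1) * c₂) / (ρ₀ * γ) := by
  have hγ₁ : γ - 1 ≠ 0 := sub_ne_zero.mpr hγ.ne'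
  have hc_const : c = (γ - 1) * c₂ := by rw [← henthalpy, mul_div_cancel₀ _ hγ₁]
  have hdensity : ρ₀ * m / w = ((γ - 1) * c₂ / (k * γ)) ^ (γ - 1)⁻¹ :=
    eq_rpow_inv_of_mul_rpow_eq (by positivity) hγ₁ (by positivity) (hc.symm.trans hc_const)
  rw [← hdensity, ← hc_const]
  field_simp

section StillState

variable {f M A D Q ca2 I₁ I₂ hw : ℝ → ℝ → ℝ} {S Z : ℝ → ℝ} {γ g θ κ c₁ : ℝ}

theorem pt_eq_zero_of_time_independent (hf : ∀ t₁ t₂ x, f t₁ x = f t₂ x) (t x : ℝ) :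
    pt f t x = 0 := by
  have hconst : (fun s => f s x) = fun _ => f 0 x := funext fun s => hf s 0 x
  rw [pt, hconst, deriv_const]

theorem px_eq_zero_of_forall_eq_zero (hf : ∀ t x, f t x = 0) (t x : ℝ) : px f t x = 0 := by
  have hzero : (fun y => f t y) = fun _ => 0 := funext (hf t)
  rw [px, hzero, deriv_const]

theorem still_mass_balance (hM : ∀ t₁ t₂ x, M t₁ x = M t₂ x) (hD : ∀ t x, D t x = 0)
    (t x : ℝ) : pt M t x + px D t x = 0 := by
  rw [pt_eq_zero_of_time_independent hM, px_eq_zero_of_forall_eq_zero hD, add_zero]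

theorem still_air_momentum_balance (hD : ∀ t x, D t x = 0) (hSA : ∀ t x, S x - A t x ≠ 0)
    (hP : ∀ t x, M t x * ca2 t x / (γ * (S x - A t x)) = κ) (t x : ℝ) :
    pt D t x + px (fun t x => D t x ^ 2 / M t x + M t x * ca2 t x / γ) t x
      = M t x * ca2 t x / (γ * (S x - A t x)) * px (fun t x => S x - A t x) t x := by
  have hflux : (fun y => D t y ^ 2 / M t y + M t y * ca2 t y / γ)
      = fun y => κ * (S y - A t y) := funext fun y => by
    rw [hD, ← hP t y, zero_pow two_ne_zero, zero_div, zero_add]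
    field_simp [hSA t y]
  have hDt : pt D t x = 0 :=
    pt_eq_zero_of_time_independent (fun t₁ t₂ x => (hD t₁ x).trans (hD t₂ x).symm) t x
  rw [hDt, zero_add, hP, px, hflux, deriv_const_mul_field, px]

theorem still_water_momentum_balance (hQ : ∀ t x, Q t x = 0)
    (hI₁ : ∀ t, Differentiable ℝ (I₁ t)) (hA : ∀ t, Differentiable ℝ (A t))
    (hP : ∀ t x, M t x * ca2 t x / (γ * (S x - A t x)) = κ)
    (hLeibniz : ∀ t x, px I₁ t x = I₂ t x + A t x * px hw t x)
    (hhydrostatic : ∀ t x, px hw t x * Real.cos θ + deriv Z x = 0) (t x : ℝ) :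
    pt Q t x + px (fun t x => Q t x ^ 2 / A t x + g * I₁ t x * Real.cos θ
        + A t x * (M t x * ca2 t x / (γ * (S x - A t x)))) t x
      = -g * A t x * deriv Z x + g * I₂ t x * Real.cos θ
        + M t x * ca2 t x / (γ * (S x - A t x)) * px A t x := by
  have hflux : (fun y => Q t y ^ 2 / A t y + g * I₁ t y * Real.cos θ
        + A t y * (M t y * ca2 t y / (γ * (S y - A t y))))
      = fun y => g * Real.cos θ * I₁ t y + κ * A t y := funext fun y => by
    rw [hQ, hP]
    ring
  have hQt : pt Q t x = 0 :=
    pt_eq_zero_of_time_independent (fun t₁ t₂ x => (hQ t₁ x).trans (hQ t₂ x).symm) t x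
  have hpx_flux : deriv (fun y => g * Real.cos θ * I₁ t y + κ * A t y) x
      = g * Real.cos θ * px I₁ t x + κ * px A t x := by
    rw [deriv_fun_add ((hI₁ t x).const_mul _) ((hA t x).const_mul _),
      deriv_const_mul_field, deriv_const_mul_field, px, px]
  rw [hQt, zero_add, px, hflux, hpx_flux, hLeibniz, hP]
  linear_combination (g * A t x) * hhydrostatic t x

theorem hydrostatic_balance (hP : ∀ t x, M t x * ca2 t x / (γ * (S x - A t x)) = κ)
    (hhead : ∀ t x, hw t x * Real.cos θ + Z x
        + M t x * ca2 t x / (g * γ * (S x - A t x)) = c₁) (t x : ℝ) :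
    px hw t x * Real.cos θ + deriv Z x = 0 := by
  refine deriv_mul_const_add_deriv_eq_zero (C := c₁ - κ / g) (fun y => ?_) x
  rw [← hhead t y, ← hP t y, mul_assoc, mul_comm g, ← div_div]
  ring

end StillState

theorem still_state_is_stationary_solution_general
    (g θ γ k ρ₀ : ℝ) (hγ : 1 < γ) (hk : 0 < k) (hρ₀ : 0 < ρ₀)
    (S Z : ℝ → ℝ)
    (I₁ I₂ hw : ℝ → ℝ → ℝ)
    (hI₁reg : ContDiff ℝ 1 (Function.uncurry I₁))
    (M A : ℝ → ℝ → ℝ)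
    (hAreg : ContDiff ℝ 1 (Function.uncurry A))
    (hMstat : ∀ t₁ t₂ x, M t₁ x = M t₂ x)
    (hAstat : ∀ t₁ t₂ x, A t₁ x = A t₂ x)
    (hMpos : ∀ t x, 0 < M t x)
    (hSA : ∀ t x, 0 < S x - A t x)
    (D Q : ℝ → ℝ → ℝ)
    (hD : ∀ t x, D t x = 0) (hQ : ∀ t x, Q t x = 0)
    (ca2 : ℝ → ℝ → ℝ)
    (hca2 : ∀ t x, ca2 t x = k * γ * (ρ₀ * M t x / (S x - A t x)) ^ (γ - 1))
    (hLeibniz : ∀ t x, px I₁ t x = I₂ t x + A t x * px hw t x)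
    (c₁ c₂ : ℝ)
    (hhead : ∀ t x, hw t x * Real.cos θ + Z x
        + M t x * ca2 t x / (g * γ * (S x - A t x)) = c₁)
    (henthalpy : ∀ t x, ca2 t x / (γ - 1) = c₂) :
    (∀ t x, pt M t x + px D t x = 0)
    ∧ (∀ t x,
        pt D t x + px (fun t x => D t x ^ 2 / M t x + M t x * ca2 t x / γ) t x
          = M t x * ca2 t x / (γ * (S x - A t x))
              * px (fun t x => S x - A t x) t x)
    ∧ (∀ t x, pt A t x + px Q t x = 0)
    ∧ (∀ t x,
        pt Q t x + px (fun t x => Q t x ^ 2 / A t x + g * I₁ t x * Real.cos θ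
            + A t x * (M t x * ca2 t x / (γ * (S x - A t x)))) t x
          = -g * A t x * deriv Z x + g * I₂ t x * Real.cos θ
            + M t x * ca2 t x / (γ * (S x - A t x)) * px A t x) := by
  have hP := fun t x => air_pressure_eq hk.ne' hγ hρ₀ (hMpos t x).le (hSA t x).le
    (hca2 t x) (henthalpy t x)
  have hI₁ := (hI₁reg.differentiable one_ne_zero).apply_of_uncurry
  have hA := (hAreg.differentiable one_ne_zero).apply_of_uncurry
  exact ⟨still_mass_balance hMstat hD,
    still_air_momentum_balance hD (fun t x => (hSA t x).ne') hP,
    still_mass_balance hAstat hQ,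
    still_water_momentum_balance hQ hI₁ hA hP hLeibniz (hydrostatic_balance hP hhead)⟩

/-- the still air/water state (`u = v = 0`, constant water
piezometric-type head `h_w cos θ + Z + M c_a²/(gγ(S-A))` and constant air
enthalpy `c_a²/(γ-1)`) is a stationary solution of the two-layer system. -/
theorem still_state_is_stationary_solution
    (g θ γ k ρ₀ : ℝ) (hg : 0 < g) (hγ : 1 < γ) (hk : 0 < k) (hρ₀ : 0 < ρ₀)
    (S Z : ℝ → ℝ) (hSreg : ContDiff ℝ 1 S) (hZreg : ContDiff ℝ 1 Z)
    (hSpos : ∀ x, 0 < S x)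
    (I₁ I₂ hw : ℝ → ℝ → ℝ)
    (hI₁reg : ContDiff ℝ 1 (Function.uncurry I₁))
    (hI₂reg : ContDiff ℝ 1 (Function.uncurry I₂))
    (hhwreg : ContDiff ℝ 1 (Function.uncurry hw))
    (M A : ℝ → ℝ → ℝ)
    (hMreg : ContDiff ℝ 1 (Function.uncurry M))
    (hAreg : ContDiff ℝ 1 (Function.uncurry A))
    (hMstat : ∀ t₁ t₂ x, M t₁ x = M t₂ x)
    (hAstat : ∀ t₁ t₂ x, A t₁ x = A t₂ x)
    (hMpos : ∀ t x, 0 < M t x) (hApos : ∀ t x, 0 < A t x)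
    (hSA : ∀ t x, 0 < S x - A t x)
    (D Q : ℝ → ℝ → ℝ)
    (hD : ∀ t x, D t x = 0) (hQ : ∀ t x, Q t x = 0)
    (ca2 : ℝ → ℝ → ℝ)
    (hca2 : ∀ t x, ca2 t x = k * γ * (ρ₀ * M t x / (S x - A t x)) ^ (γ - 1))
    (hLeibniz : ∀ t x, px I₁ t x = I₂ t x + A t x * px hw t x)
    (c₁ c₂ : ℝ)
    (hhead : ∀ t x, hw t x * Real.cos θ + Z x
        + M t x * ca2 t x / (g * γ * (S x - A t x)) = c₁)
    (henthalpy : ∀ t x, ca2 t x / (γ - 1) = c₂) :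
    (∀ t x, pt M t x + px D t x = 0)
    ∧ (∀ t x,
        pt D t x + px (fun t x => D t x ^ 2 / M t x + M t x * ca2 t x / γ) t x
          = M t x * ca2 t x / (γ * (S x - A t x))
              * px (fun t x => S x - A t x) t x)
    ∧ (∀ t x, pt A t x + px Q t x = 0)
    ∧ (∀ t x,
        pt Q t x + px (fun t x => Q t x ^ 2 / A t x + g * I₁ t x * Real.cos θ
            + A t x * (M t x * ca2 t x / (γ * (S x - A t x)))) t x
          = -g * A t x * deriv Z x + g * I₂ t x * Real.cos θ
            + M t x * ca2 t x / (γ * (S x - A t x)) * px A t x) :=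
  still_state_is_stationary_solution_general g θ γ k ρ₀ hγ hk hρ₀ S Z I₁ I₂ hw hI₁reg M A hAreg
    hMstat hAstat hMpos hSA D Q hD hQ ca2 hca2 hLeibniz c₁ c₂ hhead henthalpy
end
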